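/- Let G be the pregame with unique left option G^L = {0, * | *} (left options 0 and *, right option *) and unique right option G^R = {* | 0, *} (left option *, right options 0 and *). Then the pair (G^L, G^R) satisfies the F2 property but does not satisfy the F1 property. -/

import Mathlib

universe u

namespace SetTheory

/-- Pre-games, as in Mathlib of December 2024 (removed from Mathlib since). -/
inductive PGame : Type (u + 1)
  | mk : ∀ α β : Type u, (α → PGame) → (β → PGame) → PGame

namespace PGame

def LeftMoves : PGame → Type u
  | mk l _ _ _ => l

def RightMoves : PGame → Type u
  | mk _ r _ _ => r

def moveLeft : ∀ g : PGame, LeftMoves g → PGame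
  | mk _l _ L _ => L

def moveRight : ∀ g : PGame, RightMoves g → PGame
  | mk _ _r _ R => R

/-- The pair (x ≤ y, x ⧏ y), defined by simultaneous recursion. -/
noncomputable def leLF (x : PGame.{u}) : PGame.{u} → Prop × Prop :=
  PGame.rec (motive := fun _ => PGame.{u} → Prop × Prop)
    (fun xl xr xL xR IHxl IHxr y =>
      PGame.rec (motive := fun _ => Prop × Prop)
        (fun yl yr yL yR IHyl IHyr =>
          ((∀ i, (IHxl i (mk yl yr yL yR)).2) ∧ ∀ j, (IHyr j).2,
            (∃ i, (IHyl i).1) ∨ ∃ j, (IHxr j (mk yl yr yL yR)).1))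
        y) x

noncomputable instance le : LE PGame.{u} :=
  ⟨fun x y => (leLF x y).1⟩

instance : Zero PGame.{u} :=
  ⟨⟨PEmpty, PEmpty, PEmpty.elim, PEmpty.elim⟩⟩

def star : PGame.{u} :=
  ⟨PUnit, PUnit, fun _ => 0, fun _ => 0⟩

def ofLists (L R : List PGame.{u}) : PGame.{u} :=
  mk (ULift (Fin L.length)) (ULift (Fin R.length)) (fun i => L.get i.down) fun j => R.get j.down

end PGame

end SetTheory

open SetTheory PGame

/-- A set of pregames is hereditarily closed (HCR) if it is closed under taking
left and right options. -/
def HCR (S : Set PGame) : Prop :=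
  ∀ G ∈ S, (∀ i, G.moveLeft i ∈ S) ∧ ∀ j, G.moveRight j ∈ S

/-- The pair `(xL, xR)` satisfies the F1 property if some left option of `xR` is `≥ xL`,
or some right option of `xL` is `≤ xR`. -/
def F1 (xL xR : PGame) : Prop :=
  (∃ i, xL ≤ xR.moveLeft i) ∨ ∃ j, xL.moveRight j ≤ xR

/-- The pair `(xL, xR)` satisfies the F2 property if some right option of `xL` is `≤`
some left option of `xR`. -/
def F2 (xL xR : PGame) : Prop :=
  ∃ (j : xL.RightMoves) (i : xR.LeftMoves), xL.moveRight j ≤ xR.moveLeft i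

theorem leLF_mk (xl xr : Type u) (xL : xl → PGame.{u}) (xR : xr → PGame.{u})
    (yl yr : Type u) (yL : yl → PGame.{u}) (yR : yr → PGame.{u}) :
    leLF (PGame.mk xl xr xL xR) (PGame.mk yl yr yL yR) =
      ((∀ i, (leLF (xL i) (PGame.mk yl yr yL yR)).2) ∧ ∀ j, (leLF (PGame.mk xl xr xL xR) (yR j)).2,
        (∃ i, (leLF (PGame.mk xl xr xL xR) (yL i)).1) ∨ ∃ j, (leLF (xR j) (PGame.mk yl yr yL yR)).1) :=
  rfl

theorem le_iff_leLF (x y : PGame.{u}) : (x ≤ y) = (leLF x y).1 := rfl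

theorem zero_eq_mk : (0 : PGame.{u}) = PGame.mk PEmpty PEmpty PEmpty.elim PEmpty.elim := rfl

theorem star_eq_mk : (star : PGame.{u}) = PGame.mk PUnit PUnit (fun _ => 0) (fun _ => 0) := rfl

theorem stmt_10 :
    F2 (PGame.ofLists [0, star] [star]) (PGame.ofLists [star] [0, star]) ∧
      ¬F1 (PGame.ofLists [0, star] [star]) (PGame.ofLists [star] [0, star]) := by
  simp [F1, F2, ofLists, moveLeft, moveRight, LeftMoves, RightMoves, le_iff_leLF, zero_eq_mk, star_eq_mk, leLF_mk,
    ULift.forall, ULift.exists, Fin.forall_fin_two, Fin.exists_fin_two]
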